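/- arXiv:0712.3954 — 9 statements merged into one kernel-verified Lean document; each statement's English description precedes it below -/
import Mathlib

section
/- Let s be a nonzero integer and n ≥ 2. Then the cyclic system of n simultaneous congruences (∏_{k=1}^n q_k)/q_i ≡ s (mod |q_i|) for 1 ≤ i ≤ n has infinitely many solutions in nonzero integers (q_1, …, q_n) such that at least two of the |q_i| are ≥ 2 and gcd(q_1·q_2⋯q_n, s) = 1. -/
open Finset

/-!
Put `a` and `s - a` in two coordinates and `1` everywhere else. The cofactor of each of the two
nontrivial coordinates is the other one, and `(s - a) - s = -a`, `a - s = -(s - a)`, so every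
congruence holds. If `a` is prime to `s` then so is `s - a`, and if `|a| ≥ |s| + 2` then both
coordinates have absolute value at least `2`; there are infinitely many such `a`, e.g. among
`a ≡ 1 (mod s)`.
-/

section PairVector

variable {ι R : Type*} [DecidableEq ι]

def pairVector [CommMonoid R] (i j : ι) (a b : R) : ι → R :=
  Pi.mulSingle i a * Pi.mulSingle j b

variable {i j : ι}

theorem prod_pairVector [CommMonoid R] (a b : R) (T : Finset ι) :
    ∏ k ∈ T, pairVector i j a b k = (if i ∈ T then a else 1) * (if j ∈ T then b else 1) := by
  simp only [pairVector, Pi.mul_apply, prod_mul_distrib, prod_pi_mulSingle']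

theorem pairVector_apply_left [CommMonoid R] (hij : i ≠ j) (a b : R) :
    pairVector i j a b i = a := by
  simp [pairVector, Pi.mulSingle_eq_of_ne hij]

theorem pairVector_apply_right [CommMonoid R] (hij : i ≠ j) (a b : R) :
    pairVector i j a b j = b := by
  simp [pairVector, Pi.mulSingle_eq_of_ne hij.symm]

theorem pairVector_apply_of_ne [CommMonoid R] {k : ι} (hi : k ≠ i) (hj : k ≠ j) (a b : R) :
    pairVector i j a b k = 1 := by
  simp [pairVector, Pi.mulSingle_eq_of_ne hi, Pi.mulSingle_eq_of_ne hj]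

theorem pairVector_ne_zero [CommMonoidWithZero R] [NoZeroDivisors R] [Nontrivial R] {a b : R}
    (ha : a ≠ 0) (hb : b ≠ 0) (k : ι) : pairVector i j a b k ≠ 0 := by
  simp only [pairVector, Pi.mul_apply, Pi.mulSingle_apply]
  split_ifs <;> simp [ha, hb]

variable [Fintype ι]

theorem prod_pairVector_univ [CommMonoid R] (a b : R) :
    ∏ k, pairVector i j a b k = a * b := by
  simp [prod_pairVector]

theorem pairVector_dvd_prod_erase_sub [CommRing R] (hij : i ≠ j) (a s : R) (k : ι) :
    pairVector i j a (s - a) k ∣ (∏ l ∈ univ.erase k, pairVector i j a (s - a) l) - s := by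
  rw [prod_pairVector]
  by_cases hki : k = i
  · subst hki
    simp [pairVector_apply_left hij, hij.symm]
  by_cases hkj : k = j
  · subst hkj
    simpa [pairVector_apply_right hij, hij] using (dvd_refl (s - a)).neg_right
  · simp [pairVector_apply_of_ne hki hkj]

end PairVector

theorem isCoprime_mul_sub_self {R : Type*} [CommRing R] {a s : R} (h : IsCoprime a s) :
    IsCoprime (a * (s - a)) s := by
  refine h.mul_left ?_
  simpa [sub_eq_neg_add, mul_comm] using h.neg_left.add_mul_left_left 1

theorem two_le_abs_sub_of_abs_add_two_le {s a : ℤ} (ha : |s| + 2 ≤ |a|) : 2 ≤ |s - a| := by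
  rw [abs_sub_comm]
  linarith [abs_sub_abs_le_abs_sub a s]

theorem setOf_isCoprime_abs_ge_infinite {s : ℤ} (hs : s ≠ 0) (c : ℤ) :
    {a : ℤ | IsCoprime a s ∧ c ≤ |a|}.Infinite := by
  refine Set.infinite_of_forall_exists_gt fun N => ?_
  set m := |N| + |c|
  have hm : 0 ≤ m := by positivity
  have hlarge : m ≤ s * (s * m) := by nlinarith [mul_self_pos.2 hs]
  refine ⟨1 + s * (s * m), ⟨isCoprime_one_left.add_mul_left_left _, ?_⟩, ?_⟩
  · rw [abs_of_nonneg (by linarith)]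
    linarith [le_abs_self c, abs_nonneg N]
  · linarith [le_abs_self N, abs_nonneg c]

/-- For `r = 1`, the cyclic system of congruences
`(∏ q_k)/q_i ≡ s (mod |q_i|)` has infinitely many nontrivial integer
solutions with `gcd(q_1 ⋯ q_n, s) = 1`. -/
theorem cyclic_congruence_r_eq_one_infinite
    (s : ℤ) (hs : s ≠ 0) (n : ℕ) (hn : 2 ≤ n) :
    {q : Fin n → ℤ |
        (∀ i, q i ≠ 0) ∧
        (∀ i, q i ∣ (∏ k ∈ Finset.univ.erase i, q k) - s) ∧
        (∃ i j, i ≠ j ∧ 2 ≤ |q i| ∧ 2 ≤ |q j|) ∧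
        Int.gcd (∏ i, q i) s = 1}.Infinite := by
  have : Nontrivial (Fin n) := Fin.nontrivial_iff_two_le.2 hn
  obtain ⟨i, j, hij⟩ := exists_pair_ne (Fin n)
  have hinj : Function.Injective fun a : ℤ => pairVector i j a (s - a) := fun a b hab => by
    simpa [pairVector_apply_left hij] using congrFun hab i
  refine ((setOf_isCoprime_abs_ge_infinite hs (|s| + 2)).image hinj.injOn).mono ?_
  rintro _ ⟨a, ⟨hcop, ha⟩, rfl⟩
  dsimp only
  have hsa := two_le_abs_sub_of_abs_add_two_le ha
  refine ⟨pairVector_ne_zero ?_ ?_, pairVector_dvd_prod_erase_sub hij a s, ⟨i, j, hij, ?_, ?_⟩, ?_⟩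
  · rw [← abs_pos]; linarith [abs_nonneg s]
  · rw [← abs_pos]; linarith
  · rw [pairVector_apply_left hij]; linarith [abs_nonneg s]
  · rwa [pairVector_apply_right hij]
  · rw [prod_pairVector_univ, ← Int.isCoprime_iff_gcd_eq_one]
    exact isCoprime_mul_sub_self hcop
end

section
/- Let s be a nonzero integer, n ≥ 2, and set M_n* = u_1·u_2⋯u_n, where u_i is Sylvester's sequence. If gcd(s, M_n*) = 1, then the cyclic system of n simultaneous congruences (∏_{k=1}^n q_k)/q_i ≡ s (mod |q_i|) for 1 ≤ i ≤ n has infinitely many solutions in nonzero integers (q_1, …, q_n) satisfying gcd(q_1·q_2⋯q_n, s) = 1 and min_i |q_i| ≥ 2. -/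
/-!
Take `x ≡ -1 (mod s)` and the Sylvester-type sequence `w 0 = x`, `w (k + 1) = 1 - w 0 ⋯ w k`.
Each `w i` divides the product of the other `w`'s minus `1`, so appending `s - w 0 ⋯ w k` solves
the system with parameter `s`: modulo `w i` the other terms multiply to `1 · s`, and modulo the
appended term they multiply to `w 0 ⋯ w k ≡ s`. Modulo `s` the products `w 0 ⋯ w k` follow the
recursion `P ↦ P (1 - P)`, as do `-u 1 ⋯ u k`, so they are coprime to `s`. Letting `|x| → ∞`
gives infinitely many solutions, all with `|q i| ≥ 2`.
-/

open Finset

theorem IsCoprime.of_modEq {s a b : ℤ} (h : a ≡ b [ZMOD s]) (hb : IsCoprime s b) :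
    IsCoprime s a := by
  obtain ⟨c, hc⟩ := h.symm.dvd
  rw [show a = b + s * c by linarith]
  exact hb.add_mul_left_right c

section CyclicSystem

variable {ι : Type*} [DecidableEq ι]

def IsCyclicSolution (S : Finset ι) (q : ι → ℤ) (s : ℤ) : Prop :=
  ∀ i ∈ S, q i ∣ ∏ k ∈ S.erase i, q k - s

theorem IsCyclicSolution.insert_update {S : Finset ι} {w : ι → ℤ} {j : ι} (hj : j ∉ S)
    (hw : IsCyclicSolution S w 1) (s : ℤ) :
    IsCyclicSolution (insert j S) (Function.update w j (s - ∏ k ∈ S, w k)) s := by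
  intro i hi
  rcases mem_insert.mp hi with rfl | hiS
  · rw [erase_insert hj, Function.update_self, prod_update_of_notMem hj]
    exact ⟨-1, by ring⟩
  · have hij : i ≠ j := ne_of_mem_of_not_mem hiS hj
    have hjS : j ∉ S.erase i := fun h => hj (mem_of_mem_erase h)
    rw [erase_insert_of_ne hij.symm, prod_insert hjS, prod_update_of_notMem hjS,
      Function.update_self, Function.update_of_ne hij, ← mul_prod_erase S w hiS]
    obtain ⟨c, hc⟩ := hw i hiS
    set P := ∏ k ∈ S.erase i, w k
    exact ⟨s * c - P ^ 2, by linear_combination s * hc⟩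

theorem IsCyclicSolution.forall_fin {n : ℕ} {q : ℕ → ℤ} {s : ℤ}
    (hq : IsCyclicSolution (range n) q s) (i : Fin n) :
    q i ∣ ∏ k ∈ univ.erase i, q k - s := by
  have h := hq i (mem_range.mpr i.isLt)
  rwa [← Nat.Iio_eq_range, ← Fin.map_valEmbedding_univ, ← Fin.valEmbedding_apply,
    ← map_erase, prod_map] at h

end CyclicSystem

/-- `sylvesterProd x k` is the product of the first `k + 1` terms of `sylvesterTerm x`; for
`x = -1` these terms are `-1, 2, 3, 7, 43, …`. -/
def sylvesterProd (x : ℤ) : ℕ → ℤ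
  | 0 => x
  | k + 1 => sylvesterProd x k * (1 - sylvesterProd x k)

def sylvesterTerm (x : ℤ) : ℕ → ℤ
  | 0 => x
  | k + 1 => 1 - sylvesterProd x k

theorem prod_range_sylvesterTerm (x : ℤ) (k : ℕ) :
    ∏ i ∈ range (k + 1), sylvesterTerm x i = sylvesterProd x k := by
  induction k with
  | zero => simp [sylvesterTerm, sylvesterProd]
  | succ k ih => rw [prod_range_succ, ih]; rfl

theorem isCyclicSolution_sylvesterTerm (x : ℤ) (k : ℕ) :
    IsCyclicSolution (range (k + 1)) (sylvesterTerm x) 1 := by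
  induction k with
  | zero => simp [IsCyclicSolution]
  | succ k ih =>
    have h := ih.insert_update (j := k + 1) (by simp) 1
    rwa [← range_add_one, prod_range_sylvesterTerm, ← sylvesterTerm,
      Function.update_eq_self] at h

theorem abs_le_abs_sylvesterProd {x : ℤ} (hx : 3 ≤ |x|) (k : ℕ) :
    |x| ≤ |sylvesterProd x k| := by
  induction k with
  | zero => rfl
  | succ k ih =>
    have h : |sylvesterProd x k| - 1 ≤ |1 - sylvesterProd x k| := by
      simpa [abs_sub_comm] using abs_sub_abs_le_abs_sub (sylvesterProd x k) 1
    rw [sylvesterProd, abs_mul]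
    nlinarith

theorem two_le_abs_sylvesterTerm {x : ℤ} (hx : 3 ≤ |x|) (k : ℕ) :
    2 ≤ |sylvesterTerm x k| := by
  cases k with
  | zero => exact le_trans (by norm_num) hx
  | succ k =>
    have h := abs_sub_abs_le_abs_sub (sylvesterProd x k) 1
    rw [abs_one, abs_sub_comm] at h
    have := abs_le_abs_sylvesterProd hx k
    rw [sylvesterTerm]
    linarith

theorem sylvesterProd_modEq_neg_prod {s x : ℤ} {u : ℕ → ℤ}
    (hu : ∀ k, u (k + 1) = ∏ i ∈ Icc 1 k, u i + 1) (hx : x ≡ -1 [ZMOD s]) (k : ℕ) :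
    sylvesterProd x k ≡ -∏ i ∈ Icc 1 k, u i [ZMOD s] := by
  induction k with
  | zero => simpa [sylvesterProd] using hx
  | succ k ih =>
    rw [sylvesterProd, prod_Icc_succ_top (by omega), hu, show
      -((∏ i ∈ Icc 1 k, u i) * (∏ i ∈ Icc 1 k, u i + 1)) =
        (-∏ i ∈ Icc 1 k, u i) * (1 - -∏ i ∈ Icc 1 k, u i) by ring]
    exact ih.mul (ih.sub_left 1)

def cyclicSolution (s x : ℤ) (k : ℕ) : ℕ → ℤ :=
  Function.update (sylvesterTerm x) (k + 1) (s - sylvesterProd x k)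

section CyclicSolution

variable (s x : ℤ) (k : ℕ)

theorem isCyclicSolution_cyclicSolution :
    IsCyclicSolution (range (k + 2)) (cyclicSolution s x k) s := by
  have h := (isCyclicSolution_sylvesterTerm x k).insert_update (j := k + 1) (by simp) s
  rwa [← range_add_one, prod_range_sylvesterTerm] at h

theorem prod_range_cyclicSolution :
    ∏ i ∈ range (k + 2), cyclicSolution s x k i = sylvesterProd x k * (s - sylvesterProd x k) := by
  rw [prod_range_succ, cyclicSolution, prod_update_of_notMem (by simp), Function.update_self,
    prod_range_sylvesterTerm]

theorem cyclicSolution_zero : cyclicSolution s x k 0 = x :=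
  Function.update_of_ne (by omega) _ _

variable {s x}

theorem two_le_abs_cyclicSolution (hx : 3 ≤ |x|) (hxs : |s| + 2 ≤ |x|) (i : ℕ) :
    2 ≤ |cyclicSolution s x k i| := by
  rcases eq_or_ne i (k + 1) with rfl | hi
  · have h := abs_sub_abs_le_abs_sub (sylvesterProd x k) s
    rw [abs_sub_comm] at h
    rw [cyclicSolution, Function.update_self]
    linarith [abs_le_abs_sylvesterProd hx k]
  · rw [cyclicSolution, Function.update_of_ne hi]
    exact two_le_abs_sylvesterTerm hx i

end CyclicSolution

/-- If `gcd(s, u_1 u_2 ⋯ u_n) = 1` where `u` is Sylvester's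
sequence (`u 1 = 2`, `u (k+1) = u 1 ⋯ u k + 1`), then the cyclic system of
congruences `(∏ q_k)/q_i ≡ s (mod |q_i|)` has infinitely many integer
solutions with `gcd(q_1 ⋯ q_n, s) = 1` and all `|q_i| ≥ 2`. -/
theorem cyclic_congruence_r_eq_one_infinite_min_ge_two
    (s : ℤ) (hs : s ≠ 0) (n : ℕ) (hn : 2 ≤ n)
    (u : ℕ → ℤ) (hu1 : u 1 = 2)
    (hu : ∀ k, 1 ≤ k → u (k + 1) = (∏ i ∈ Finset.Icc 1 k, u i) + 1)
    (hgcd : Int.gcd s (∏ i ∈ Finset.Icc 1 n, u i) = 1) :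
    {q : Fin n → ℤ |
        (∀ i, 2 ≤ |q i|) ∧
        (∀ i, q i ∣ (∏ k ∈ Finset.univ.erase i, q k) - s) ∧
        Int.gcd (∏ i, q i) s = 1}.Infinite := by
  obtain ⟨k, rfl⟩ : ∃ k, n = k + 2 := ⟨n - 2, by omega⟩
  have hu' : ∀ k, u (k + 1) = ∏ i ∈ Icc 1 k, u i + 1 := fun k => by
    rcases k.eq_zero_or_pos with rfl | hk
    · simpa using hu1
    · exact hu k hk
  have hP : IsCoprime s (∏ i ∈ Icc 1 k, u i) :=
    (Int.isCoprime_iff_gcd_eq_one.mpr hgcd).of_isCoprime_of_dvd_right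
      (prod_dvd_prod_of_subset _ _ _ (Icc_subset_Icc_right (by omega)))
  have hs1 : 1 ≤ |s| := abs_pos.mpr hs
  let x : ℕ → ℤ := fun m => |s| * (m + 4) - 1
  have hx_inj : Function.Injective x := fun m₁ m₂ h => by
    simpa using mul_left_cancel₀ (by positivity : |s| ≠ 0) (sub_left_injective h)
  refine Set.infinite_of_injective_forall_mem
    (f := fun m (i : Fin (k + 2)) => cyclicSolution s (x m) k i)
    (fun m₁ m₂ h => hx_inj (by simpa [cyclicSolution_zero] using congr_fun h 0)) fun m => ?_
  have hxs : |s| + 2 ≤ |x m| := by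
    have : |s| + 2 ≤ x m := by simp only [x]; nlinarith
    exact this.trans (le_abs_self _)
  have hxmod : x m ≡ -1 [ZMOD s] := Int.modEq_iff_dvd.mpr <| by
    rw [show -1 - x m = -(|s| * (m + 4)) by ring]
    exact ((self_dvd_abs s).mul_right _).neg_right
  have hQ : IsCoprime s (sylvesterProd (x m) k) :=
    hP.neg_right.of_modEq (sylvesterProd_modEq_neg_prod hu' hxmod k)
  refine ⟨fun i => two_le_abs_cyclicSolution k (by linarith) hxs i,
    (isCyclicSolution_cyclicSolution s (x m) k).forall_fin, ?_⟩
  rw [Fin.prod_univ_eq_prod_range (cyclicSolution s (x m) k), prod_range_cyclicSolution,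
    Int.gcd_comm, ← Int.isCoprime_iff_gcd_eq_one]
  have hQ' := hQ.neg_right.add_mul_left_right 1
  rw [mul_one, neg_add_eq_sub] at hQ'
  exact hQ.mul_right hQ'
end

section
/- Let r ≥ 2 and s be integers with gcd(r, s) = 1 and s nonzero, and let n ≥ 2. Then the cyclic system of n simultaneous congruences r·((∏_{k=1}^n q_k)/q_i) ≡ s (mod |q_i|) for 1 ≤ i ≤ n has only finitely many solutions in nonzero integers (q_1, …, q_n) with gcd(q_1·q_2⋯q_n, s) = 1, and every such solution satisfies max_i |q_i| ≤ (r(n+1))^{2^{n−1}} + |s|. -/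
/-!
A solution is pairwise coprime, so for every set `S` of indices `∏_{k ∈ S} q_k` divides
`r ∑_{k ∈ S} P / q_k - s`, where `P = ∏_k q_k`; this is nonzero since `r ∤ s`. Hence
`(∏_{k ∈ S} |q_k|) m ≤ r n |P| + |s| m` whenever `0 ≤ m ≤ |q_k|` on `S`.

Let `|q_j|` be the largest of the `|q_k|` and suppose it exceeds `|s|`. Adding the indices
`i ≠ j` to a set `T` in increasing order of `|q_i|` and applying the inequality to the complement
of `T`, which contains both `i` and `j`, gives `|q_i| ≤ rn ∏_{k ∈ T} |q_k|`; so the quantity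
`rn ∏_{k ∈ T} |q_k|` at most squares at each step and stays below `(rn)^(2^#T)`. Finally
`S = {j}` gives `|q_j| ≤ rn ∏_{k ≠ j} |q_k| + |s| ≤ (rn)^(2^(n-1)) + |s|`.
-/

open Finset Function

namespace CyclicCongruence

variable {ι : Type*} [Fintype ι] [DecidableEq ι]

section Growth

variable {a : ι → ℤ} {K t : ℤ}
  (H : ∀ (S : Finset ι) (m : ℤ), 0 ≤ m → (∀ k ∈ S, m ≤ a k) →
    (∏ k ∈ S, a k) * m ≤ K * ∏ k, a k + t * m)
include H

theorem le_mul_prod_of_le_compl (ha : ∀ k, 1 ≤ a k) {T : Finset ι} {i j : ι} (hi : i ∉ T)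
    (hj : j ∉ T) (hij : i ≠ j) (htj : t < a j) (hmin : ∀ k ∉ T, a i ≤ a k) :
    a i ≤ K * ∏ k ∈ T, a k := by
  set L := ∏ k ∈ T, a k
  set R := ∏ k ∈ Tᶜ, a k
  have hcompl : R * a i ≤ K * (L * R) + t * a i := by
    rw [prod_mul_prod_compl]
    exact H Tᶜ (a i) (by linarith [ha i]) fun k hk => hmin k (mem_compl.mp hk)
  have hpair : a i * a j ≤ R := by
    rw [← prod_pair hij]
    refine prod_le_prod_of_subset_of_one_le ?_ (fun k _ => by linarith [ha k]) fun k _ _ => ha k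
    simp [insert_subset_iff, hi, hj]
  -- if `K L < a i` then `R ≤ R (a i - K L) ≤ t a i < a i a j ≤ R`
  by_contra! hlt
  have hR : 0 ≤ R := hpair.trans' (mul_nonneg (by linarith [ha i]) (by linarith [ha j]))
  have hshrink : R ≤ R * (a i - K * L) := le_mul_of_one_le_right hR (by omega)
  have hgrow : a i * (t + 1) ≤ a i * a j := mul_le_mul_of_nonneg_left htj (by linarith [ha i])
  linarith [ha i]

theorem mul_prod_le_pow_card (ha : ∀ k, 1 ≤ a k) (hK : 0 ≤ K) {j : ι} (htj : t < a j)
    (T : Finset ι) (hj : j ∉ T) (hlow : ∀ x ∈ T, ∀ k ∉ T, a x ≤ a k) :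
    K * ∏ k ∈ T, a k ≤ K ^ 2 ^ #T := by
  revert hj hlow
  refine Finset.induction_on_max_value a T (by simp) fun i T hiT hmax ih hj hlow => ?_
  obtain ⟨hji, hjT⟩ : j ≠ i ∧ j ∉ T := not_or.mp (mt mem_insert.mpr hj)
  have hlowT : ∀ x ∈ T, ∀ k ∉ T, a x ≤ a k := fun x hx k hk => by
    by_cases hki : k = i
    · exact hki ▸ hmax x hx
    · exact hlow x (mem_insert_of_mem hx) k (by simp [hki, hk])
  have hmin : ∀ k ∉ T, a i ≤ a k := fun k hk => by
    by_cases hki : k = i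
    · exact hki ▸ le_rfl
    · exact hlow i (mem_insert_self i T) k (by simp [hki, hk])
  have hai := le_mul_prod_of_le_compl H ha hiT hjT hji.symm htj hmin
  have hKL : 0 ≤ K * ∏ k ∈ T, a k :=
    mul_nonneg hK (prod_nonneg fun k _ => zero_le_one.trans (ha k))
  calc K * ∏ k ∈ insert i T, a k = a i * (K * ∏ k ∈ T, a k) := by
        rw [prod_insert hiT]; ring
    _ ≤ (K * ∏ k ∈ T, a k) ^ 2 := by rw [sq]; gcongr
    _ ≤ (K ^ 2 ^ #T) ^ 2 := by gcongr; exact ih hjT hlowT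
    _ = K ^ 2 ^ #(insert i T) := by rw [card_insert_of_notMem hiT, ← pow_mul, pow_succ]

theorem le_pow_add_of_prod_mul_le (ha : ∀ k, 1 ≤ a k) (hK : 0 ≤ K) (i : ι) :
    a i ≤ K ^ 2 ^ (Fintype.card ι - 1) + t := by
  obtain ⟨j, -, hj⟩ := exists_max_image univ a ⟨i, mem_univ i⟩
  suffices a j ≤ K ^ 2 ^ (Fintype.card ι - 1) + t from (hj i (mem_univ i)).trans this
  by_cases htj : a j ≤ t
  · linarith [pow_nonneg hK (2 ^ (Fintype.card ι - 1))]
  have hrest := mul_prod_le_pow_card H ha hK (not_le.mp htj) (univ.erase j)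
    (notMem_erase j univ) fun x _ k hk => by
      obtain rfl : k = j := by simpa using hk
      exact hj x (mem_univ x)
  rw [card_erase_of_mem (mem_univ j), card_univ] at hrest
  have hsingle := H {j} (a j) (by linarith [ha j]) (by simp)
  rw [prod_singleton, ← mul_prod_erase univ a (mem_univ j)] at hsingle
  have : a j * a j ≤ a j * (K * ∏ k ∈ univ.erase j, a k + t) := by linarith
  linarith [le_of_mul_le_mul_left this (by linarith [ha j])]

end Growth

theorem sum_prod_erase_mul_le {R : Type*} [CommRing R] [LinearOrder R] [IsStrictOrderedRing R]
    {a : ι → R} (ha : ∀ k, 0 ≤ a k) {S : Finset ι} {m : R} (hm : ∀ k ∈ S, m ≤ a k) :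
    (∑ k ∈ S, ∏ l ∈ univ.erase k, a l) * m ≤ #S * ∏ k, a k := by
  rw [sum_mul, ← nsmul_eq_mul, ← sum_const]
  gcongr with k hk
  calc (∏ l ∈ univ.erase k, a l) * m ≤ (∏ l ∈ univ.erase k, a l) * a k := by
        gcongr
        · exact prod_nonneg fun l _ => ha l
        · exact hm k hk
    _ = ∏ k, a k := prod_erase_mul _ _ (mem_univ k)

variable {r s : ℤ} {q : ι → ℤ}

theorem pairwise_isCoprime (hdvd : ∀ i, q i ∣ r * ∏ k ∈ univ.erase i, q k - s)
    (hgs : Int.gcd (∏ i, q i) s = 1) : Pairwise (IsCoprime on q) := by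
  intro i j hij
  have hjs : IsCoprime (q j) s := (Int.isCoprime_iff_gcd_eq_one.mpr hgs).of_isCoprime_of_dvd_left
    (dvd_prod_of_mem q (mem_univ j))
  obtain ⟨c, hc⟩ : q j ∣ r * ∏ k ∈ univ.erase i, q k :=
    (dvd_prod_of_mem q (mem_erase.mpr ⟨hij.symm, mem_univ j⟩)).mul_left r
  have hj : IsCoprime (q j) (r * ∏ k ∈ univ.erase i, q k - s) := by
    rw [hc, sub_eq_neg_add]
    exact hjs.neg_right.add_mul_left_right c
  exact (hj.of_isCoprime_of_dvd_right (hdvd i)).symm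

theorem prod_dvd_mul_sum_prod_erase_sub (hdvd : ∀ i, q i ∣ r * ∏ k ∈ univ.erase i, q k - s)
    (hcop : Pairwise (IsCoprime on q)) (S : Finset ι) :
    ∏ k ∈ S, q k ∣ r * ∑ k ∈ S, ∏ l ∈ univ.erase k, q l - s := by
  refine prod_dvd_of_coprime (hcop.set_pairwise _) fun j hj => ?_
  have hrest : q j ∣ r * ∑ k ∈ S.erase j, ∏ l ∈ univ.erase k, q l :=
    (dvd_sum fun k hk => dvd_prod_of_mem q
      (mem_erase.mpr ⟨(ne_of_mem_erase hk).symm, mem_univ j⟩)).mul_left r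
  rw [← add_sum_erase S _ hj, mul_add, add_sub_right_comm]
  exact dvd_add (hdvd j) hrest

theorem mul_sub_ne_zero (hr : 2 ≤ r) (hrs : Int.gcd r s = 1) (x : ℤ) : r * x - s ≠ 0 := by
  intro h
  have hu : IsUnit r := (Int.isCoprime_iff_gcd_eq_one.mpr hrs).isUnit_of_dvd' dvd_rfl
    ⟨x, (sub_eq_zero.mp h).symm⟩
  rcases Int.isUnit_iff.mp hu with h1 | h1 <;> omega

theorem prod_abs_le (hr : 2 ≤ r) (hrs : Int.gcd r s = 1)
    (hdvd : ∀ i, q i ∣ r * ∏ k ∈ univ.erase i, q k - s) (hcop : Pairwise (IsCoprime on q))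
    (S : Finset ι) : ∏ k ∈ S, |q k| ≤ r * ∑ k ∈ S, ∏ l ∈ univ.erase k, |q l| + |s| :=
  calc ∏ k ∈ S, |q k| = |∏ k ∈ S, q k| := (abs_prod _ _).symm
    _ ≤ |r * ∑ k ∈ S, ∏ l ∈ univ.erase k, q l - s| :=
      Int.le_of_dvd (abs_pos.mpr (mul_sub_ne_zero hr hrs _))
        ((abs_dvd_abs _ _).mpr (prod_dvd_mul_sum_prod_erase_sub hdvd hcop S))
    _ ≤ |r * ∑ k ∈ S, ∏ l ∈ univ.erase k, q l| + |s| := abs_sub _ _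
    _ ≤ r * ∑ k ∈ S, ∏ l ∈ univ.erase k, |q l| + |s| := by
      rw [abs_mul, abs_of_nonneg (by omega)]
      gcongr
      exact (abs_sum_le_sum_abs _ _).trans_eq (sum_congr rfl fun k _ => abs_prod _ _)

theorem prod_abs_mul_le (hr : 2 ≤ r) (hrs : Int.gcd r s = 1)
    (hdvd : ∀ i, q i ∣ r * ∏ k ∈ univ.erase i, q k - s) (hcop : Pairwise (IsCoprime on q))
    (S : Finset ι) (m : ℤ) (hm0 : 0 ≤ m) (hm : ∀ k ∈ S, m ≤ |q k|) :
    (∏ k ∈ S, |q k|) * m ≤ r * Fintype.card ι * ∏ k, |q k| + |s| * m := by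
  have hS := mul_le_mul_of_nonneg_right (prod_abs_le hr hrs hdvd hcop S) hm0
  have hsum := sum_prod_erase_mul_le (fun k => abs_nonneg (q k)) hm
  have hcard : (#S : ℤ) * ∏ k, |q k| ≤ Fintype.card ι * ∏ k, |q k| := by
    gcongr
    exact_mod_cast card_le_univ S
  nlinarith

theorem abs_le_pow_add (hr : 2 ≤ r) (hrs : Int.gcd r s = 1) (h0 : ∀ i, q i ≠ 0)
    (hdvd : ∀ i, q i ∣ r * ∏ k ∈ univ.erase i, q k - s) (hgs : Int.gcd (∏ i, q i) s = 1)
    (i : ι) : |q i| ≤ (r * Fintype.card ι) ^ 2 ^ (Fintype.card ι - 1) + |s| :=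
  le_pow_add_of_prod_mul_le (a := fun k => |q k|)
    (prod_abs_mul_le hr hrs hdvd (pairwise_isCoprime hdvd hgs))
    (fun k => Int.one_le_abs (h0 k)) (by positivity) i

end CyclicCongruence

open CyclicCongruence in
theorem cyclic_congruence_r_ge_two_finite_general
    (r s : ℤ) (hr : 2 ≤ r) (hrs : Int.gcd r s = 1)
    (n : ℕ) :
    {q : Fin n → ℤ |
        (∀ i, q i ≠ 0) ∧
        (∀ i, q i ∣ r * (∏ k ∈ Finset.univ.erase i, q k) - s) ∧
        Int.gcd (∏ i, q i) s = 1}.Finite ∧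
    ∀ q : Fin n → ℤ,
      (∀ i, q i ≠ 0) →
      (∀ i, q i ∣ r * (∏ k ∈ Finset.univ.erase i, q k) - s) →
      Int.gcd (∏ i, q i) s = 1 →
      ∀ i, |q i| ≤ (r * ((n : ℤ) + 1)) ^ (2 ^ (n - 1)) + |s| := by
  set C := (r * ((n : ℤ) + 1)) ^ (2 ^ (n - 1)) + |s| with hC
  have hbound (q : Fin n → ℤ) (h0 : ∀ i, q i ≠ 0)
      (hdvd : ∀ i, q i ∣ r * (∏ k ∈ univ.erase i, q k) - s) (hgs : Int.gcd (∏ i, q i) s = 1)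
      (i : Fin n) : |q i| ≤ C := by
    have h := abs_le_pow_add hr hrs h0 hdvd hgs i
    rw [Fintype.card_fin] at h
    exact h.trans (by rw [hC]; gcongr; omega)
  refine ⟨(Set.finite_Icc (fun _ => -C) fun _ => C).subset fun q ⟨h0, hdvd, hgs⟩ => ?_, hbound⟩
  exact ⟨fun i => (abs_le.mp (hbound q h0 hdvd hgs i)).1,
    fun i => (abs_le.mp (hbound q h0 hdvd hgs i)).2⟩

/-- For `r ≥ 2` the cyclic system of congruences has only
finitely many integer solutions with `gcd(q_1 ⋯ q_n, s) = 1`, all satisfying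
`max |q_i| ≤ (r(n+1))^(2^(n-1)) + |s|`. -/
theorem cyclic_congruence_r_ge_two_finite
    (r s : ℤ) (hr : 2 ≤ r) (hs : s ≠ 0) (hrs : Int.gcd r s = 1)
    (n : ℕ) (hn : 2 ≤ n) :
    {q : Fin n → ℤ |
        (∀ i, q i ≠ 0) ∧
        (∀ i, q i ∣ r * (∏ k ∈ Finset.univ.erase i, q k) - s) ∧
        Int.gcd (∏ i, q i) s = 1}.Finite ∧
    ∀ q : Fin n → ℤ,
      (∀ i, q i ≠ 0) →
      (∀ i, q i ∣ r * (∏ k ∈ Finset.univ.erase i, q k) - s) →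
      Int.gcd (∏ i, q i) s = 1 →
      ∀ i, |q i| ≤ (r * ((n : ℤ) + 1)) ^ (2 ^ (n - 1)) + |s| :=
  cyclic_congruence_r_ge_two_finite_general r s hr hrs n
end

section
/- Let r and s be nonzero integers with r > 0 and gcd(r, s) = 1, and let n ≥ 2. For nonzero integers (q_1, …, q_n) with gcd(q_1·q_2⋯q_n, s) = 1, the following are equivalent: (1) the q_i satisfy the cyclic system of congruences r·((∏_{k=1}^n q_k)/q_i) ≡ s (mod |q_i|) for all 1 ≤ i ≤ n; (2) there exists an integer m such that r·(1/q_1 + ⋯ + 1/q_n) − s/(q_1·q_2⋯q_n) = m. -/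
/-!
Write `P = ∏ q_k` and `N = r ∑_i ∏_{k ≠ i} q_k - s`. The rational number in (2) is `N / P`, so (2)
says `P ∣ N`. Modulo `q_i` every summand of `N` except the `i`-th vanishes, so `q_i ∣ N` is exactly
the `i`-th congruence; this gives (2) ⇒ (1). Conversely, since `s` is a unit modulo `q_i`, the
`i`-th congruence makes `∏_{k ≠ i} q_k` a unit modulo `q_i`, so the `q_i` are pairwise coprime
and `q_i ∣ N` for all `i` gives `P ∣ N`.
-/

open Finset

section CyclicCongruence

variable {ι R : Type*} [DecidableEq ι] [CommRing R] {s : Finset ι} {q : ι → R} {i : ι}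

theorem dvd_sum_prod_erase_sub_iff (hi : i ∈ s) (r t : R) :
    q i ∣ r * ∑ j ∈ s, ∏ k ∈ s.erase j, q k - t ↔ q i ∣ r * ∏ k ∈ s.erase i, q k - t := by
  have hrest : q i ∣ r * ∑ j ∈ s.erase i, ∏ k ∈ s.erase j, q k :=
    dvd_mul_of_dvd_right (dvd_sum fun j hj =>
      dvd_prod_of_mem q (mem_erase.2 ⟨(ne_of_mem_erase hj).symm, hi⟩)) r
  rw [← add_sum_erase s _ hi, mul_add, add_sub_right_comm]
  exact dvd_add_left hrest

theorem isCoprime_prod_erase_of_dvd_sub {r t : R} (hcop : IsCoprime (∏ k ∈ s, q k) t)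
    (hi : i ∈ s) (h : q i ∣ r * ∏ k ∈ s.erase i, q k - t) :
    IsCoprime (q i) (∏ k ∈ s.erase i, q k) := by
  obtain ⟨c, hc⟩ := h
  have ht : t = r * ∏ k ∈ s.erase i, q k + q i * -c := by rw [mul_neg, ← hc]; ring
  have hqt : IsCoprime (q i) t := hcop.of_prod_left i hi
  rw [ht] at hqt
  exact hqt.of_add_mul_left_right.of_mul_right_right

theorem forall_dvd_prod_erase_sub_iff_prod_dvd {r t : R} (hcop : IsCoprime (∏ k ∈ s, q k) t) :
    (∀ i ∈ s, q i ∣ r * ∏ k ∈ s.erase i, q k - t) ↔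
      (∏ k ∈ s, q k) ∣ r * ∑ j ∈ s, ∏ k ∈ s.erase j, q k - t := by
  constructor
  · intro h
    have hpair : (s : Set ι).Pairwise fun i j => IsCoprime (q i) (q j) := fun i hi j hj hij =>
      (isCoprime_prod_erase_of_dvd_sub hcop hi (h i hi)).of_isCoprime_of_dvd_right
        (dvd_prod_of_mem q (mem_erase.2 ⟨hij.symm, hj⟩))
    exact prod_dvd_of_coprime hpair fun i hi => (dvd_sum_prod_erase_sub_iff hi r t).2 (h i hi)
  · intro h i hi
    exact (dvd_sum_prod_erase_sub_iff hi r t).1 ((dvd_prod_of_mem q hi).trans h)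

end CyclicCongruence

theorem Finset.sum_inv_eq_sum_prod_erase_div {ι K : Type*} [DecidableEq ι] [Field K]
    {s : Finset ι} {f : ι → K} (hf : ∀ i ∈ s, f i ≠ 0) :
    ∑ i ∈ s, (f i)⁻¹ = (∑ i ∈ s, ∏ j ∈ s.erase i, f j) / ∏ i ∈ s, f i := by
  rw [sum_div]
  refine sum_congr rfl fun i hi => ?_
  rw [← mul_prod_erase s f hi, div_mul_cancel_right₀ (prod_ne_zero_iff.2 fun j hj =>
    hf j (mem_of_mem_erase hj))]

theorem exists_intCast_eq_intCast_div_iff_dvd {K : Type*} [Field K] [CharZero K] {a b : ℤ}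
    (hb : b ≠ 0) : (∃ m : ℤ, (a : K) / b = m) ↔ b ∣ a := by
  constructor
  · rintro ⟨m, hm⟩
    rw [div_eq_iff (Int.cast_ne_zero.2 hb)] at hm
    exact ⟨m, by rw [mul_comm]; exact_mod_cast hm⟩
  · rintro ⟨m, rfl⟩
    exact ⟨m, by push_cast; field_simp⟩

theorem cyclic_congruence_iff_diophantine_general
    (r s : ℤ) (n : ℕ)
    (q : Fin n → ℤ) (hq : ∀ i, q i ≠ 0)
    (hgcd : Int.gcd (∏ i, q i) s = 1) :
    (∀ i, q i ∣ r * (∏ k ∈ Finset.univ.erase i, q k) - s) ↔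
      ∃ m : ℤ,
        (r : ℚ) * (∑ i, ((q i : ℚ))⁻¹) - (s : ℚ) / (∏ i, (q i : ℚ)) = (m : ℚ) := by
  have hP : (∏ i, q i) ≠ 0 := prod_ne_zero_iff.2 fun i _ => hq i
  have hrational : (r : ℚ) * (∑ i, ((q i : ℚ))⁻¹) - (s : ℚ) / (∏ i, (q i : ℚ)) =
      ((r * ∑ i, ∏ k ∈ univ.erase i, q k - s : ℤ) : ℚ) / ((∏ i, q i : ℤ) : ℚ) := by
    rw [sum_inv_eq_sum_prod_erase_div fun i _ => Int.cast_ne_zero.2 (hq i)]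
    push_cast
    field_simp
  rw [hrational, exists_intCast_eq_intCast_div_iff_dvd hP,
    ← forall_dvd_prod_erase_sub_iff_prod_dvd (Int.isCoprime_iff_gcd_eq_one.2 hgcd)]
  simp only [mem_univ, true_imp_iff]

/-- **Lemma 2.1.** For nonzero integers `q_i` with
`gcd(q_1 ⋯ q_n, s) = 1`, satisfying the cyclic system of congruences is
equivalent to satisfying `r (1/q_1 + ⋯ + 1/q_n) - s/(q_1 ⋯ q_n) = m` for
some integer `m`. -/
theorem cyclic_congruence_iff_diophantine
    (r s : ℤ) (hr : 0 < r) (hs : s ≠ 0) (hrs : Int.gcd r s = 1)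
    (n : ℕ) (hn : 2 ≤ n)
    (q : Fin n → ℤ) (hq : ∀ i, q i ≠ 0)
    (hgcd : Int.gcd (∏ i, q i) s = 1) :
    (∀ i, q i ∣ r * (∏ k ∈ Finset.univ.erase i, q k) - s) ↔
      ∃ m : ℤ,
        (r : ℚ) * (∑ i, ((q i : ℚ))⁻¹) - (s : ℚ) / (∏ i, (q i : ℚ)) = (m : ℚ) :=
  cyclic_congruence_iff_diophantine_general r s n q hq hgcd
end

section
/- Let r and s be nonzero integers with r > 0 and gcd(r, s) = 1, let n ≥ 2, and let (q_1, …, q_n) be nonzero integers satisfying the cyclic system of congruences r·((∏_{k=1}^n q_k)/q_i) ≡ s (mod |q_i|) for all 1 ≤ i ≤ n. Then gcd(q_1·q_2⋯q_n, s) = 1 holds if and only if the q_i are pairwise relatively prime, i.e. gcd(q_i, q_j) = 1 for all i ≠ j. -/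
open Finset

/-! Modulo `q i` the system says `s ≡ r * ∏_{k ≠ i} q k`. So if `∏ q` is coprime to `s`, each
`q i` is coprime to `∏_{k ≠ i} q k`, hence to every other `q j`. Conversely, if `q i` is coprime to
`∏_{k ≠ i} q k`, a common factor of `q i` and `s` would divide `r`, contradicting `gcd(r, s) = 1`.
Only Bézout identities are used, so the argument works in any commutative ring. -/

variable {R ι : Type*} [CommRing R]

def SolvesCyclicSystem [Fintype ι] [DecidableEq ι] (r s : R) (q : ι → R) : Prop :=
  ∀ i, q i ∣ r * ∏ k ∈ univ.erase i, q k - s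

theorem IsCoprime.of_dvd_mul_sub {a r s P : R} (has : IsCoprime a s) (h : a ∣ r * P - s) :
    IsCoprime a P := by
  obtain ⟨t, ht⟩ := h
  have : IsCoprime a (r * P) := by
    simpa [sub_eq_iff_eq_add.mp ht, add_comm] using has.add_mul_left_right t
  exact this.of_mul_right_right

theorem IsCoprime.of_dvd_mul_sub_of_isCoprime {a r s P : R} (hrs : IsCoprime r s)
    (haP : IsCoprime a P) (h : a ∣ r * P - s) : IsCoprime a s := by
  obtain ⟨x, y, hxy⟩ := haP
  obtain ⟨u, v, huv⟩ := hrs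
  obtain ⟨t, ht⟩ := h
  -- `P = P * (u * r + v * s) ≡ s * (u + v * P)` modulo `a`, since `r * P ≡ s`.
  exact ⟨x + y * u * t, y * (u + v * P), by linear_combination hxy + y * P * huv - y * u * ht⟩

section Family

variable [Fintype ι] [DecidableEq ι] {r s : R} {q : ι → R}

theorem SolvesCyclicSystem.pairwise_isCoprime (hq : SolvesCyclicSystem r s q)
    (h : IsCoprime (∏ i, q i) s) : Pairwise fun i j => IsCoprime (q i) (q j) := by
  intro i j hij
  have hqi : IsCoprime (q i) (∏ k ∈ univ.erase i, q k) :=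
    (h.of_isCoprime_of_dvd_left (dvd_prod_of_mem q (mem_univ i))).of_dvd_mul_sub (hq i)
  exact hqi.of_isCoprime_of_dvd_right (dvd_prod_of_mem q (mem_erase.mpr ⟨hij.symm, mem_univ j⟩))

theorem SolvesCyclicSystem.isCoprime_prod (hq : SolvesCyclicSystem r s q) (hrs : IsCoprime r s)
    (h : Pairwise fun i j => IsCoprime (q i) (q j)) : IsCoprime (∏ i, q i) s :=
  IsCoprime.prod_left fun i _ => hrs.of_dvd_mul_sub_of_isCoprime
    (IsCoprime.prod_right fun _ hj => h (mem_erase.mp hj).1.symm) (hq i)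

end Family

theorem gcd_prod_s_iff_pairwise_coprime_general
    (r s : ℤ) (hrs : Int.gcd r s = 1)
    (n : ℕ)
    (q : Fin n → ℤ)
    (hcong : ∀ i, q i ∣ r * (∏ k ∈ Finset.univ.erase i, q k) - s) :
    Int.gcd (∏ i, q i) s = 1 ↔ ∀ i j, i ≠ j → Int.gcd (q i) (q j) = 1 := by
  have hq : SolvesCyclicSystem r s q := hcong
  simp only [← Int.isCoprime_iff_gcd_eq_one] at hrs ⊢
  exact ⟨fun h i j hij => hq.pairwise_isCoprime h hij,
    fun h => hq.isCoprime_prod hrs fun i j hij => h i j hij⟩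

/-- For nonzero integers `q_i` satisfying the cyclic system
of congruences, `gcd(q_1 ⋯ q_n, s) = 1` holds iff the `q_i` are pairwise
relatively prime. -/
theorem gcd_prod_s_iff_pairwise_coprime
    (r s : ℤ) (hr : 0 < r) (hs : s ≠ 0) (hrs : Int.gcd r s = 1)
    (n : ℕ) (hn : 2 ≤ n)
    (q : Fin n → ℤ) (hq : ∀ i, q i ≠ 0)
    (hcong : ∀ i, q i ∣ r * (∏ k ∈ Finset.univ.erase i, q k) - s) :
    Int.gcd (∏ i, q i) s = 1 ↔ ∀ i j, i ≠ j → Int.gcd (q i) (q j) = 1 :=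
  gcd_prod_s_iff_pairwise_coprime_general r s hrs n q hcong
end

section
/- Let r and s be nonzero integers with r ≥ 1 and gcd(r, s) = 1, and let n ≥ 2 be such that u_n(r) − s − 1 ≥ 2. Then the tuple (q_1, …, q_n) = (u_1(r), u_2(r), …, u_{n−1}(r), u_n(r) − s − 1) consists of positive integers and satisfies r·(1/q_1 + ⋯ + 1/q_n) − s/(q_1·q_2⋯q_n) = 1; in particular, the bound q_n ≤ u_n(r) − s − 1 of the previous result is attained whenever u_n(r) > s². -/
/-!
With `P_m = u_1 ⋯ u_m` the recurrence reads `u_{m+1} = r P_m + 1`, which makes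
`1 - r (1/u_1 + ⋯ + 1/u_m) = 1/P_m` telescope. The last entry `q_n = r P_{n-1} - s` then
contributes `r/q_n - s/(P_{n-1} q_n) = 1/P_{n-1}`, exactly the missing amount.
-/

open Finset

@[to_additive]
lemma prod_univ_fin_shift_eq_prod_Icc {M : Type*} [CommMonoid M] (f : ℕ → M) (m : ℕ) :
    ∏ i : Fin m, f (i + 1) = ∏ i ∈ Icc 1 m, f i := by
  rw [Fin.prod_univ_eq_prod_range (fun i ↦ f (i + 1)), range_eq_Ico, prod_Ico_add']
  rfl

lemma prod_Icc_one_pos {R : Type*} [CommRing R] [LinearOrder R] [IsStrictOrderedRing R]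
    {r : R} (hr : 0 ≤ r) {u : ℕ → R} (hu : ∀ k, u (k + 1) = r * ∏ i ∈ Icc 1 k, u i + 1)
    (m : ℕ) : 0 < ∏ i ∈ Icc 1 m, u i := by
  induction m with
  | zero => simp
  | succ m ih =>
    rw [prod_Icc_succ_top (by omega), hu m]
    exact mul_pos ih (by positivity)

lemma mul_sum_inv_eq_one_sub_inv_prod {K : Type*} [Field K] {r : K} {u : ℕ → K}
    (hu : ∀ k, u (k + 1) = r * ∏ i ∈ Icc 1 k, u i + 1) {m : ℕ}
    (hne : ∀ i ∈ Icc 1 m, u i ≠ 0) :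
    r * ∑ i ∈ Icc 1 m, (u i)⁻¹ = 1 - (∏ i ∈ Icc 1 m, u i)⁻¹ := by
  induction m with
  | zero => simp
  | succ m ih =>
    have hne' : ∀ i ∈ Icc 1 m, u i ≠ 0 := fun i hi ↦ hne i (Icc_subset_Icc_right m.le_succ hi)
    have hP : ∏ i ∈ Icc 1 m, u i ≠ 0 := prod_ne_zero_iff.mpr hne'
    have hu' : r * ∏ i ∈ Icc 1 m, u i + 1 ≠ 0 := hu m ▸ hne (m + 1) (by simp)
    rw [sum_Icc_succ_top (by omega), prod_Icc_succ_top (by omega), mul_add, ih hne', hu m]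
    grind

lemma mul_add_inv_sub_div_mul_eq_one {K : Type*} [Field K] {r s S P : K}
    (hS : r * S = 1 - P⁻¹) (hP : P ≠ 0) (hQ : r * P - s ≠ 0) :
    r * (S + (r * P - s)⁻¹) - s / (P * (r * P - s)) = 1 := by
  rw [mul_add, hS]
  grind

theorem extremal_solution_attains_bound_general
    (r s : ℤ) (hr : 1 ≤ r)
    (n : ℕ) (hn : 2 ≤ n)
    (u : ℕ → ℤ) (hu1 : u 1 = r + 1)
    (hu : ∀ k, 1 ≤ k → u (k + 1) = r * (∏ i ∈ Finset.Icc 1 k, u i) + 1)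
    (hbig : 2 ≤ u n - s - 1)
    (q : Fin n → ℤ)
    (hqdef : ∀ i : Fin n, q i = if (i : ℕ) + 1 < n then u ((i : ℕ) + 1) else u n - s - 1) :
    (∀ i, 0 < q i) ∧
      (r : ℚ) * (∑ i, ((q i : ℚ))⁻¹) - (s : ℚ) / (∏ i, (q i : ℚ)) = 1 := by
  have hrec : ∀ k, u (k + 1) = r * ∏ i ∈ Icc 1 k, u i + 1
    | 0 => by simp [hu1]
    | k + 1 => hu (k + 1) k.succ_pos
  have hrec_ℚ : ∀ k, (u (k + 1) : ℚ) = r * ∏ i ∈ Icc 1 k, (u i : ℚ) + 1 := fun k ↦ by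
    exact_mod_cast hrec k
  have hpos : ∀ k, 0 < u (k + 1) := fun k ↦ by
    rw [hrec]; nlinarith [prod_Icc_one_pos (by omega) hrec k]
  obtain ⟨m, rfl⟩ : ∃ m, n = m + 1 := ⟨n - 1, by omega⟩
  have hq_init : ∀ i : Fin m, q i.castSucc = u (i + 1) := fun i ↦ by simp [hqdef]
  have hq_last : q (Fin.last m) = u (m + 1) - s - 1 := by simp [hqdef]
  refine ⟨Fin.lastCases (by omega) fun i ↦ hq_init i ▸ hpos i, ?_⟩
  have hne : ∀ i ∈ Icc 1 m, (u i : ℚ) ≠ 0 := fun i hi ↦ by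
    obtain ⟨k, rfl⟩ : ∃ k, i = k + 1 := ⟨i - 1, by grind⟩
    exact_mod_cast (hpos k).ne'
  have hq_last_ℚ : (q (Fin.last m) : ℚ) = r * ∏ i ∈ Icc 1 m, (u i : ℚ) - s := by
    push_cast [hq_last, hrec_ℚ]; ring
  rw [Fin.sum_univ_castSucc, Fin.prod_univ_castSucc, hq_last_ℚ]
  simp only [hq_init, prod_univ_fin_shift_eq_prod_Icc (fun i ↦ (u i : ℚ)),
    sum_univ_fin_shift_eq_sum_Icc (fun i ↦ (u i : ℚ)⁻¹)]
  refine mul_add_inv_sub_div_mul_eq_one (mul_sum_inv_eq_one_sub_inv_prod hrec_ℚ hne)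
    (prod_ne_zero_iff.mpr hne) ?_
  rw [← hq_last_ℚ]
  exact_mod_cast (by omega : q (Fin.last m) ≠ 0)

/-- If `u_n(r) - s - 1 ≥ 2`, then the tuple
`(u_1(r), …, u_{n-1}(r), u_n(r) - s - 1)` consists of positive integers and
satisfies `r(1/q_1 + ⋯ + 1/q_n) - s/(q_1 ⋯ q_n) = 1`, so the bound
`q_n ≤ u_n(r) - s - 1` is attained. -/
theorem extremal_solution_attains_bound
    (r s : ℤ) (hr : 1 ≤ r) (hs : s ≠ 0) (hrs : Int.gcd r s = 1)
    (n : ℕ) (hn : 2 ≤ n)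
    (u : ℕ → ℤ) (hu1 : u 1 = r + 1)
    (hu : ∀ k, 1 ≤ k → u (k + 1) = r * (∏ i ∈ Finset.Icc 1 k, u i) + 1)
    (hbig : 2 ≤ u n - s - 1)
    (q : Fin n → ℤ)
    (hqdef : ∀ i : Fin n, q i = if (i : ℕ) + 1 < n then u ((i : ℕ) + 1) else u n - s - 1) :
    (∀ i, 0 < q i) ∧
      (r : ℚ) * (∑ i, ((q i : ℚ))⁻¹) - (s : ℚ) / (∏ i, (q i : ℚ)) = 1 :=
  extremal_solution_attains_bound_general r s hr n hn u hu1 hu hbig q hqdef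
end

section
/- Let s be a nonzero integer and n ≥ 2. Then the Diophantine equation 1/x_1 + ⋯ + 1/x_n = s/(x_1·x_2⋯x_n) has infinitely many solutions in nonzero integers (x_1, …, x_n) satisfying min_i |x_i| ≥ 2. -/
/-!
Write `P = x₁ ⋯ xₖ`. If `∑ 1/xᵢ = 1/P`, then appending `y = s - P` gives
`∑ 1/xᵢ + 1/y = (y + P)/(P y) = s/(P y)`, a solution for `s` with one more variable.
Taking `s = 1` repeatedly, starting from the one-term tuple `(t)`, produces solutions for
`s = 1` of every length whose product `P` satisfies `|P| ≥ t`; one last step with the given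
`s` then gives a solution of every length `n ≥ 2` whose first entry is `t`, and whose
entries all have absolute value at least `2` once `t ≥ |s| + 3`.
-/

open Finset

theorem sum_inv_snoc_sub_prod {n : ℕ} {x : Fin n → ℤ} (hx : ∏ i, x i ≠ 0)
    (h : ∑ i, ((x i : ℚ))⁻¹ = 1 / ∏ i, (x i : ℚ)) {s : ℤ} (hs : s ≠ ∏ i, x i) :
    ∑ i, (((Fin.snoc x (s - ∏ i, x i) : Fin (n + 1) → ℤ) i : ℤ) : ℚ)⁻¹ =
      s / ∏ i, (((Fin.snoc x (s - ∏ i, x i) : Fin (n + 1) → ℤ) i : ℤ) : ℚ) := by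
  simp only [Fin.sum_univ_castSucc, Fin.prod_univ_castSucc, Fin.snoc_castSucc, Fin.snoc_last, h]
  have hP : (∏ i, (x i : ℚ)) ≠ 0 := by exact_mod_cast hx
  have hy : (s : ℚ) - ∏ i, (x i : ℚ) ≠ 0 := sub_ne_zero.mpr (by exact_mod_cast hs)
  push_cast
  field_simp
  ring

/-- A signed variant of Sylvester's sequence: `t, 1 - t, 1 - t(1 - t), …`. -/
def sylvesterTuple (t : ℤ) : (n : ℕ) → Fin (n + 1) → ℤ
  | 0 => fun _ => t
  | n + 1 => Fin.snoc (sylvesterTuple t n) (1 - ∏ i, sylvesterTuple t n i)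

namespace sylvesterTuple

theorem apply_zero (t : ℤ) : ∀ n, sylvesterTuple t n 0 = t
  | 0 => rfl
  | n + 1 => by simpa [sylvesterTuple] using apply_zero t n

theorem prod_succ (t : ℤ) (n : ℕ) :
    ∏ i, sylvesterTuple t (n + 1) i =
      (∏ i, sylvesterTuple t n i) * (1 - ∏ i, sylvesterTuple t n i) := by
  simp only [sylvesterTuple, Fin.prod_univ_castSucc, Fin.snoc_castSucc, Fin.snoc_last]

theorem le_abs_prod {t : ℤ} (ht : 2 ≤ t) : ∀ n, t ≤ |∏ i, sylvesterTuple t n i|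
  | 0 => by simp [sylvesterTuple, le_abs_self]
  | n + 1 => by
    have ih := le_abs_prod ht n
    have h1 : 1 ≤ |1 - ∏ i, sylvesterTuple t n i| := by
      have := abs_sub_abs_le_abs_sub (∏ i, sylvesterTuple t n i) 1
      rw [abs_sub_comm] at this
      simp only [abs_one] at this
      linarith
    rw [prod_succ, abs_mul]
    exact ih.trans (le_mul_of_one_le_right (abs_nonneg _) h1)

theorem sub_one_le_abs {t : ℤ} (ht : 2 ≤ t) : ∀ n i, t - 1 ≤ |sylvesterTuple t n i|
  | 0, _ => by simp only [sylvesterTuple]; linarith [le_abs_self t]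
  | n + 1, i => by
    induction i using Fin.lastCases with
    | last =>
      have := abs_sub_abs_le_abs_sub (∏ i, sylvesterTuple t n i) 1
      rw [abs_sub_comm] at this
      simp only [sylvesterTuple, Fin.snoc_last, abs_one] at this ⊢
      linarith [le_abs_prod ht n]
    | cast i =>
      simpa only [sylvesterTuple, Fin.snoc_castSucc] using sub_one_le_abs ht n i

theorem sum_inv {t : ℤ} (ht : 2 ≤ t) :
    ∀ n, ∑ i, ((sylvesterTuple t n i : ℚ))⁻¹ = 1 / ∏ i, (sylvesterTuple t n i : ℚ)
  | 0 => by simp [sylvesterTuple]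
  | n + 1 => by
    have hP := le_abs_prod ht n
    have := sum_inv_snoc_sub_prod (x := sylvesterTuple t n) (s := 1)
      (by intro h; rw [h] at hP; simp at hP; omega) (sum_inv ht n)
      (by intro h; rw [← h] at hP; simp at hP; omega)
    simpa [sylvesterTuple] using this

end sylvesterTuple

def solutionTuple (s t : ℤ) (m : ℕ) : Fin (m + 2) → ℤ :=
  Fin.snoc (sylvesterTuple t m) (s - ∏ i, sylvesterTuple t m i)

namespace solutionTuple

theorem apply_zero (s t : ℤ) (m : ℕ) : solutionTuple s t m 0 = t := by
  simpa [solutionTuple] using sylvesterTuple.apply_zero t m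

variable {s t : ℤ}

theorem sum_inv (ht : |s| + 2 ≤ t) (m : ℕ) :
    ∑ i, ((solutionTuple s t m i : ℚ))⁻¹ = s / ∏ i, (solutionTuple s t m i : ℚ) := by
  have hP := sylvesterTuple.le_abs_prod (by linarith [abs_nonneg s]) m
  refine sum_inv_snoc_sub_prod ?_ (sylvesterTuple.sum_inv (by linarith [abs_nonneg s]) m) ?_
  · intro h; rw [h] at hP; simp at hP; linarith [abs_nonneg s]
  · intro h; rw [← h] at hP; linarith

theorem two_le_abs (ht : |s| + 3 ≤ t) (m : ℕ) (i : Fin (m + 2)) :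
    2 ≤ |solutionTuple s t m i| := by
  have ht2 : 2 ≤ t := by linarith [abs_nonneg s]
  induction i using Fin.lastCases with
  | last =>
    have := abs_sub_abs_le_abs_sub (∏ i, sylvesterTuple t m i) s
    rw [abs_sub_comm] at this
    simp only [solutionTuple, Fin.snoc_last]
    linarith [sylvesterTuple.le_abs_prod ht2 m]
  | cast i =>
    simp only [solutionTuple, Fin.snoc_castSucc]
    linarith [sylvesterTuple.sub_one_le_abs ht2 m i, abs_nonneg s]

end solutionTuple

theorem infinitely_many_solutions_m_zero_r_one_general
    (s : ℤ) (n : ℕ) (hn : 2 ≤ n) :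
    {x : Fin n → ℤ |
        (∀ i, 2 ≤ |x i|) ∧
        (∑ i, ((x i : ℚ))⁻¹) = (s : ℚ) / (∏ i, (x i : ℚ))}.Infinite := by
  obtain ⟨m, rfl⟩ : ∃ m, n = m + 2 := ⟨n - 2, by omega⟩
  have ht (k : ℕ) : |s| + 3 ≤ |s| + 3 + k := by omega
  refine Set.infinite_of_injective_forall_mem (f := fun k : ℕ ↦ solutionTuple s (|s| + 3 + k) m)
    (fun k l hkl ↦ ?_) (fun k ↦ ⟨solutionTuple.two_le_abs (ht k) m,
      solutionTuple.sum_inv (by linarith [ht k]) m⟩)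
  simpa [solutionTuple.apply_zero] using congrFun hkl 0

/-- **Theorem 4.1(2).** For every nonzero integer `s` the
equation `1/x_1 + ⋯ + 1/x_n = s/(x_1 ⋯ x_n)` has infinitely many solutions
in nonzero integers with all `|x_i| ≥ 2`. -/
theorem infinitely_many_solutions_m_zero_r_one
    (s : ℤ) (hs : s ≠ 0) (n : ℕ) (hn : 2 ≤ n) :
    {x : Fin n → ℤ |
        (∀ i, 2 ≤ |x i|) ∧
        (∑ i, ((x i : ℚ))⁻¹) = (s : ℚ) / (∏ i, (x i : ℚ))}.Infinite :=
  infinitely_many_solutions_m_zero_r_one_general s n hn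
end

section
/- Let s be a nonzero integer, m an integer, and n ≥ 2. Then the Diophantine equation (1/x_1 + ⋯ + 1/x_n) − s/(x_1·x_2⋯x_n) = m has infinitely many solutions in nonzero integers (x_1, …, x_n) if and only if one of the following holds: (i) |m| ≤ n − 2 (with s arbitrary); (ii) m = n − 1 and s = 1; (iii) m = −(n − 1) and s = (−1)^{n−1}. -/
/-!
An infinite set of solutions contains an `x` with some `|xᵢ| > 2(1 + |s|)`. Then `1/xᵢ` and
`s/∏ x` together are smaller than `1/2` in absolute value, so the other `n - 1` reciprocals sum
to within `1/2` of `m`. Each reciprocal is at most `1`, and at most `1/2` unless `xⱼ = 1`; this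
forces `m ≤ n - 1`, with equality only when `xⱼ = 1` for all `j ≠ i`, and then the equation
reads `(1 - s)/xᵢ = 0`. Negating all `xᵢ` turns solutions for `(s, m)` into solutions for
`((-1)ⁿ⁺¹ s, -m)`, which handles `m ≤ -(n - 1)`.

Conversely, `(t, 1, …, 1)` gives case (ii), and for `|m| ≤ n - 2` one prepends entries `±1`
to the two- and three-term families `(a, s - a)` and `(a, 1 - a, s - a(1 - a))` with `m = 0`.
-/

open Finset

open scoped Pointwise

section

variable {K : Type*} [Field K] [LinearOrder K] [IsStrictOrderedRing K]

theorem inv_intCast_le_one {x : ℤ} (hx : x ≠ 0) : ((x : K))⁻¹ ≤ 1 := by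
  rcases hx.lt_or_gt with hneg | hpos
  · exact (inv_neg''.2 (Int.cast_lt_zero.2 hneg)).le.trans zero_le_one
  · exact inv_le_one_of_one_le₀ (by exact_mod_cast hpos)

theorem inv_intCast_le_half {x : ℤ} (h0 : x ≠ 0) (h1 : x ≠ 1) : ((x : K))⁻¹ ≤ 1 / 2 := by
  rcases h0.lt_or_gt with hneg | hpos
  · exact (inv_neg''.2 (Int.cast_lt_zero.2 hneg)).le.trans (by norm_num)
  · rw [one_div]
    exact inv_anti₀ two_pos (by exact_mod_cast (by omega : (2 : ℤ) ≤ x))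

theorem sum_inv_intCast_le_card {ι : Type*} {t : Finset ι} {x : ι → ℤ} (hx : ∀ j ∈ t, x j ≠ 0) :
    ∑ j ∈ t, ((x j : K))⁻¹ ≤ #t := by
  simpa using sum_le_card_nsmul t _ _ fun j hj => inv_intCast_le_one (K := K) (hx j hj)

theorem sum_inv_intCast_le_card_sub_half {ι : Type*} [DecidableEq ι] {t : Finset ι} {x : ι → ℤ}
    (hx : ∀ j ∈ t, x j ≠ 0) {j : ι} (hj : j ∈ t) (hj1 : x j ≠ 1) :
    ∑ j ∈ t, ((x j : K))⁻¹ ≤ #t - 1 / 2 := by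
  have hrest := sum_inv_intCast_le_card (K := K) (t := t.erase j) fun i hi =>
    hx i (mem_of_mem_erase hi)
  rw [cast_card_erase_of_mem hj] at hrest
  rw [← add_sum_erase t _ hj]
  linarith [inv_intCast_le_half (K := K) (hx j hj) hj1]

end

theorem Set.Infinite.exists_lt_abs_apply {ι : Type*} [Finite ι] {S : Set (ι → ℤ)}
    (hS : S.Infinite) (B : ℤ) : ∃ x ∈ S, ∃ i, B < |x i| := by
  by_contra! h
  refine hS ((Set.Finite.pi fun _ => Set.finite_Icc (-B) B).subset fun x hx i _ => ?_)
  exact abs_le.1 (h x hx i)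

def solutions (n : ℕ) (s m : ℤ) : Set (Fin n → ℤ) :=
  {x | (∀ i, x i ≠ 0) ∧ (∑ i, ((x i : ℚ))⁻¹) - (s : ℚ) / (∏ i, (x i : ℚ)) = (m : ℚ)}

variable {n : ℕ} {s m : ℤ}

theorem neg_solutions : -solutions n s m = solutions n ((-1) ^ (n + 1) * s) (-m) := by
  ext x
  simp only [Set.mem_neg, solutions, Set.mem_ofPred_eq, Pi.neg_apply, ne_eq, neg_eq_zero,
    Int.cast_neg, inv_neg, sum_neg_distrib, prod_neg, card_univ, Fintype.card_fin]
  refine and_congr_right fun hx => ?_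
  have hsign : ((-1 : ℚ)) ^ n * (-1) ^ n = 1 := by rw [← mul_pow]; norm_num
  have hP : ∏ i, (x i : ℚ) ≠ 0 := prod_ne_zero_iff.2 fun i _ => Int.cast_ne_zero.2 (hx i)
  have key : (s : ℚ) / ((-1) ^ n * ∏ i, (x i : ℚ)) = (-1) ^ n * s / ∏ i, (x i : ℚ) := by
    rw [div_eq_div_iff (mul_ne_zero (pow_ne_zero _ (by norm_num)) hP) hP]
    linear_combination (-(s : ℚ) * ∏ i, (x i : ℚ)) * hsign
  push_cast
  rw [key]
  constructor <;> intro h <;> linear_combination -h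

theorem solutions_infinite_iff_neg :
    (solutions n s m).Infinite ↔ (solutions n ((-1) ^ (n + 1) * s) (-m)).Infinite := by
  rw [← neg_solutions, Set.infinite_neg]

theorem cons_one_mem_solutions {y : Fin n → ℤ} (hy : y ∈ solutions n s m) :
    (Fin.cons 1 y : Fin (n + 1) → ℤ) ∈ solutions (n + 1) s (m + 1) := by
  obtain ⟨hy0, hy⟩ := hy
  refine ⟨Fin.cases one_ne_zero hy0, ?_⟩
  simp only [Fin.sum_univ_succ, Fin.prod_univ_succ, Fin.cons_zero, Fin.cons_succ]
  push_cast
  rw [inv_one, one_mul, ← hy]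
  ring

theorem Set.Infinite.solutions_succ (h : (solutions n s m).Infinite) :
    (solutions (n + 1) s (m + 1)).Infinite :=
  (h.image (Fin.cons_right_injective (α := fun _ => ℤ) 1).injOn).mono <| by
    rintro _ ⟨y, hy, rfl⟩
    exact cons_one_mem_solutions hy

theorem solutions_one_one_zero_infinite : (solutions 1 1 0).Infinite := by
  refine Set.infinite_of_injective_forall_mem (f := fun t : ℕ => fun _ : Fin 1 => (t : ℤ) + 1)
    (fun t u h => by simpa using congrFun h 0) fun t => ⟨fun _ => by positivity, ?_⟩
  simp

theorem solutions_two_zero_infinite (s : ℤ) : (solutions 2 s 0).Infinite := by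
  refine Set.infinite_of_injective_forall_mem
    (f := fun t : ℕ => ![(t : ℤ) + |s| + 1, s - ((t : ℤ) + |s| + 1)])
    (fun t u h => by simpa using congrFun h 0) fun t => ?_
  have ha : (t : ℤ) + |s| + 1 ≠ 0 := by positivity
  have hb : s - ((t : ℤ) + |s| + 1) ≠ 0 := by linarith [le_abs_self s]
  refine ⟨fun i => by fin_cases i <;> simpa, ?_⟩
  have ha' : ((t : ℤ) + |s| + 1 : ℚ) ≠ 0 := by exact_mod_cast ha
  have hb' : ((s - ((t : ℤ) + |s| + 1) : ℤ) : ℚ) ≠ 0 := by exact_mod_cast hb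
  simp only [Fin.sum_univ_two, Fin.prod_univ_two, Matrix.cons_val_zero, Matrix.cons_val_one]
  push_cast at hb' ⊢
  field_simp
  ring

/- Taking `x₁ + x₂ = 1` turns `1/x₁ + 1/x₂ + 1/x₃ = s/(x₁x₂x₃)` into the linear equation
`x₃ = s - x₁x₂`. -/
theorem solutions_three_zero_infinite (s : ℤ) : (solutions 3 s 0).Infinite := by
  refine Set.infinite_of_injective_forall_mem
    (f := fun t : ℕ => ![(t : ℤ) + |s| + 2, 1 - ((t : ℤ) + |s| + 2),
      s - ((t : ℤ) + |s| + 2) * (1 - ((t : ℤ) + |s| + 2))])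
    (fun t u h => by simpa using congrFun h 0) fun t => ?_
  set a : ℤ := (t : ℤ) + |s| + 2
  have ha : 2 + |s| ≤ a := by simp only [a]; omega
  have hs := abs_nonneg s
  have ha0 : a ≠ 0 := by omega
  have hb0 : 1 - a ≠ 0 := by omega
  have hc0 : s - a * (1 - a) ≠ 0 := by nlinarith [neg_abs_le s]
  refine ⟨fun i => by fin_cases i <;> simpa, ?_⟩
  have ha' : (a : ℚ) ≠ 0 := by exact_mod_cast ha0
  have hb' : ((1 - a : ℤ) : ℚ) ≠ 0 := by exact_mod_cast hb0
  have hc' : ((s - a * (1 - a) : ℤ) : ℚ) ≠ 0 := by exact_mod_cast hc0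
  simp only [Fin.sum_univ_three, Fin.prod_univ_three, Matrix.cons_val_zero, Matrix.cons_val_one,
    Matrix.cons_val_two, Matrix.tail_cons, Matrix.head_cons]
  push_cast at hb' hc' ⊢
  field_simp
  ring

theorem solutions_succ_one_infinite (k : ℕ) : (solutions (k + 1) 1 k).Infinite := by
  induction k with
  | zero => exact solutions_one_one_zero_infinite
  | succ k ih => exact_mod_cast ih.solutions_succ

theorem solutions_infinite_of_abs_le (s m : ℤ) (k : ℕ) (hm : |m| ≤ k) :
    (solutions (k + 2) s m).Infinite := by
  induction k generalizing s m with
  | zero =>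
    obtain rfl : m = 0 := abs_nonpos_iff.1 (by exact_mod_cast hm)
    exact solutions_two_zero_infinite s
  | succ k ih =>
    wlog hm0 : 0 ≤ m generalizing s m
    · rw [solutions_infinite_iff_neg]
      exact this _ _ (by rwa [abs_neg]) (by omega)
    obtain rfl | hpos := hm0.eq_or_lt
    · obtain rfl | hk := k.eq_zero_or_pos
      · exact solutions_three_zero_infinite s
      · simpa using (ih s (-1) (by rw [abs_neg, abs_one]; omega)).solutions_succ
    · simpa using (ih s (m - 1) (by rw [abs_le] at hm ⊢; push_cast at hm; omega)).solutions_succ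

theorem abs_le_abs_prod_of_mem_solutions {x : Fin n → ℤ} (hx : x ∈ solutions n s m) (i : Fin n) :
    |x i| ≤ |∏ j, x j| :=
  Int.le_of_dvd (abs_pos.2 (prod_ne_zero_iff.2 fun j _ => hx.1 j))
    ((abs_dvd_abs _ _).2 (dvd_prod_of_mem _ (mem_univ i)))

theorem abs_sum_erase_inv_sub_lt {x : Fin n → ℤ} (hx : x ∈ solutions n s m) {i : Fin n}
    (hi : 2 * (1 + |s|) < |x i|) : |∑ j ∈ univ.erase i, ((x j : ℚ))⁻¹ - m| < 1 / 2 := by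
  have hi' : 2 * (1 + |(s : ℚ)|) < |(x i : ℚ)| := by exact_mod_cast hi
  have hxi : 0 < |(x i : ℚ)| := by linarith [abs_nonneg (s : ℚ)]
  have hxP : |(x i : ℚ)| ≤ |∏ j, (x j : ℚ)| := by
    exact_mod_cast abs_le_abs_prod_of_mem_solutions hx i
  have hsplit : ∑ j ∈ univ.erase i, ((x j : ℚ))⁻¹ - m = s / ∏ j, (x j : ℚ) - ((x i : ℚ))⁻¹ := by
    rw [← hx.2, ← add_sum_erase _ _ (mem_univ i)]
    ring
  calc |∑ j ∈ univ.erase i, ((x j : ℚ))⁻¹ - m|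
      ≤ |(s : ℚ) / ∏ j, (x j : ℚ)| + |((x i : ℚ))⁻¹| := hsplit ▸ abs_sub _ _
    _ ≤ |(s : ℚ)| / |(x i : ℚ)| + 1 / |(x i : ℚ)| := by
      rw [abs_div, abs_inv, one_div]
      gcongr
    _ = (1 + |(s : ℚ)|) / |(x i : ℚ)| := by ring
    _ < 1 / 2 := by rw [div_lt_iff₀ hxi]; linarith

theorem eq_one_of_mem_solutions_of_forall_ne_eq_one {x : Fin n → ℤ}
    (hx : x ∈ solutions n s (n - 1)) {i : Fin n} (hone : ∀ j ∈ univ.erase i, x j = 1) : s = 1 := by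
  obtain ⟨hx0, heq⟩ := hx
  have hprod : ∏ j, (x j : ℚ) = x i :=
    Fintype.prod_eq_single i fun j hj => by simp [hone j (mem_erase.2 ⟨hj, mem_univ j⟩)]
  have hsum : ∑ j ∈ univ.erase i, ((x j : ℚ))⁻¹ = n - 1 := by
    rw [sum_congr rfl fun j hj => by rw [hone j hj]]
    simpa using Nat.cast_pred i.pos
  rw [← add_sum_erase _ _ (mem_univ i), hsum, hprod] at heq
  have hxi : (x i : ℚ) ≠ 0 := by exact_mod_cast hx0 i
  push_cast at heq
  field_simp at heq
  exact_mod_cast (by linarith : (s : ℚ) = 1)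

theorem lt_or_eq_and_eq_one_of_solutions_infinite (h : (solutions n s m).Infinite) :
    m < n - 1 ∨ (m = n - 1 ∧ s = 1) := by
  obtain ⟨x, hx, i, hi⟩ := h.exists_lt_abs_apply (2 * (1 + |s|))
  have hclose := abs_lt.1 (abs_sum_erase_inv_sub_lt hx hi)
  have hcard : ((univ.erase i).card : ℚ) = n - 1 := by
    rw [cast_card_erase_of_mem (mem_univ i)]
    simp
  have hle : m ≤ n - 1 := by
    have := sum_inv_intCast_le_card (K := ℚ) (t := univ.erase i) fun j _ => hx.1 j
    have : (m : ℚ) < n - 1 + 1 := by linarith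
    exact Int.lt_add_one_iff.1 (by exact_mod_cast this)
  refine hle.lt_or_eq.imp_right fun hm => ⟨hm, ?_⟩
  subst hm
  refine eq_one_of_mem_solutions_of_forall_ne_eq_one hx (i := i) fun j hj => ?_
  by_contra hj1
  have := sum_inv_intCast_le_card_sub_half (K := ℚ) (fun j _ => hx.1 j) hj hj1
  push_cast at hclose
  linarith

theorem infinitely_many_solutions_iff_r_one_general
    (s : ℤ) (m : ℤ) (n : ℕ) (hn : 2 ≤ n) :
    {x : Fin n → ℤ |
        (∀ i, x i ≠ 0) ∧
        (∑ i, ((x i : ℚ))⁻¹) - (s : ℚ) / (∏ i, (x i : ℚ)) = (m : ℚ)}.Infinite ↔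
      (|m| ≤ (n : ℤ) - 2 ∨
        (m = (n : ℤ) - 1 ∧ s = 1) ∨
        (m = -((n : ℤ) - 1) ∧ s = (-1) ^ (n - 1))) := by
  change (solutions n s m).Infinite ↔ _
  have hsign : ((-1 : ℤ)) ^ (n - 1) = (-1) ^ (n + 1) := by
    rw [show n + 1 = n - 1 + 2 by omega, pow_add]
    norm_num
  have hmax : (solutions n 1 (n - 1)).Infinite := by
    obtain ⟨k, rfl⟩ := Nat.exists_eq_add_of_le' (by omega : 1 ≤ n)
    simpa using solutions_succ_one_infinite k
  rw [hsign]
  constructor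
  · intro h
    have hpos := lt_or_eq_and_eq_one_of_solutions_infinite h
    have hneg := lt_or_eq_and_eq_one_of_solutions_infinite (solutions_infinite_iff_neg.1 h)
    rcases neg_one_pow_eq_or ℤ (n + 1) with hε | hε <;> rw [hε] at hneg ⊢ <;> rw [abs_le] <;> omega
  · rintro (hm | ⟨rfl, rfl⟩ | ⟨rfl, rfl⟩)
    · obtain ⟨k, rfl⟩ := Nat.exists_eq_add_of_le' hn
      exact solutions_infinite_of_abs_le s m k (by push_cast at hm; omega)
    · exact hmax
    · rw [solutions_infinite_iff_neg, ← mul_pow, neg_neg]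
      simpa using hmax

/-- **Theorem 6.1.** For `r = 1`, the equation
`(1/x_1 + ⋯ + 1/x_n) - s/(x_1 ⋯ x_n) = m` has infinitely many solutions in
nonzero integers iff (i) `|m| ≤ n - 2`, or (ii) `m = n - 1` and `s = 1`, or
(iii) `m = -(n-1)` and `s = (-1)^(n-1)`. -/
theorem infinitely_many_solutions_iff_r_one
    (s : ℤ) (hs : s ≠ 0) (m : ℤ) (n : ℕ) (hn : 2 ≤ n) :
    {x : Fin n → ℤ |
        (∀ i, x i ≠ 0) ∧
        (∑ i, ((x i : ℚ))⁻¹) - (s : ℚ) / (∏ i, (x i : ℚ)) = (m : ℚ)}.Infinite ↔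
      (|m| ≤ (n : ℤ) - 2 ∨
        (m = (n : ℤ) - 1 ∧ s = 1) ∨
        (m = -((n : ℤ) - 1) ∧ s = (-1) ^ (n - 1))) :=
  infinitely_many_solutions_iff_r_one_general s m n hn
end

section
/- Let r ≥ 1 be an integer and n ≥ 1. Then ∑_{i=1}^n 1/u_i(r) + 1/(r·u_1(r)·u_2(r)⋯u_n(r)) = 1/r; equivalently, 1/r − ∑_{i=1}^n 1/u_i(r) = 1/(u_{n+1}(r) − 1). -/
open Finset

/-- For `r ≥ 1` and `n ≥ 1`,
`∑_{i=1}^n 1/u_i(r) + 1/(r u_1(r) ⋯ u_n(r)) = 1/r`, equivalently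
`1/r - ∑_{i=1}^n 1/u_i(r) = 1/(u_(n + 1)(r) - 1)`. -/
theorem sylvester_sum_identity
    (r : ℤ) (hr : 1 ≤ r)
    (u : ℕ → ℤ) (hu1 : u 1 = r + 1)
    (hu : ∀ k, 1 ≤ k → u (k + 1) = r * (∏ i ∈ Finset.Icc 1 k, u i) + 1)
    (n : ℕ) (hn : 1 ≤ n) :
    (∑ i ∈ Finset.Icc 1 n, ((u i : ℚ))⁻¹) +
        ((r : ℚ) * ∏ i ∈ Finset.Icc 1 n, (u i : ℚ))⁻¹ = (r : ℚ)⁻¹ ∧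
      (r : ℚ)⁻¹ - (∑ i ∈ Finset.Icc 1 n, ((u i : ℚ))⁻¹) =
        ((u (n + 1) : ℚ) - 1)⁻¹ := by
  have hpos : ∀ k, 1 ≤ k → 0 < u k := by
    intro k
    induction k using Nat.strong_induction_on with
    | _ k ih =>
      intro hk
      match k, hk with
      | 1, _ => rw [hu1]; linarith
      | (m+2), _ =>
        rw [hu (m+1) (by omega)]
        have hprod : 0 < ∏ i ∈ Finset.Icc 1 (m+1), u i :=
          Finset.prod_pos (fun i hi => ih i (by have := Finset.mem_Icc.mp hi; omega) (Finset.mem_Icc.mp hi).1)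
        nlinarith
  have hr0 : (0:ℚ) < (r:ℚ) := by exact_mod_cast lt_of_lt_of_le one_pos hr
  have hprodQ : ∀ m, 1 ≤ m → 0 < ∏ i ∈ Finset.Icc 1 m, (u i : ℚ) := by
    intro m hm
    exact Finset.prod_pos (fun i hi => by
      exact_mod_cast hpos i (Finset.mem_Icc.mp hi).1)
  have main : ∀ m, 1 ≤ m →
      (∑ i ∈ Finset.Icc 1 m, ((u i : ℚ))⁻¹) +
        ((r : ℚ) * ∏ i ∈ Finset.Icc 1 m, (u i : ℚ))⁻¹ = (r : ℚ)⁻¹ := by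
    intro m hm
    induction m, hm using Nat.le_induction with
    | base =>
      simp only [Finset.Icc_self, Finset.sum_singleton, Finset.prod_singleton, hu1]
      have h1 : ((r:ℚ) + 1) ≠ 0 := by linarith
      push_cast
      field_simp
    | succ m hm ih =>
      have hins : Finset.Icc 1 (m+1) = insert (m+1) (Finset.Icc 1 m) := by
        ext x; simp only [Finset.mem_Icc, Finset.mem_insert]; omega
      have hnotmem : (m+1) ∉ Finset.Icc 1 m := by simp
      rw [hins, Finset.sum_insert hnotmem, Finset.prod_insert hnotmem]
      have hP : 0 < ∏ i ∈ Finset.Icc 1 m, (u i : ℚ) := hprodQ m hm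
      have hU : (u (m+1) : ℚ) = (r:ℚ) * ∏ i ∈ Finset.Icc 1 m, (u i : ℚ) + 1 := by
        rw [hu m hm]; push_cast; ring
      rw [hU]
      have hrp0 : (r:ℚ) * ∏ i ∈ Finset.Icc 1 m, (u i : ℚ) ≠ 0 := by positivity
      have hrp1 : (r:ℚ) * ∏ i ∈ Finset.Icc 1 m, (u i : ℚ) + 1 ≠ 0 := by positivity
      rw [← ih]
      field_simp
      ring
  refine ⟨main n hn, ?_⟩
  have hU : ((u (n+1) : ℚ)) - 1 = (r:ℚ) * ∏ i ∈ Finset.Icc 1 n, (u i : ℚ) := by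
    rw [hu n hn]; push_cast; ring
  rw [hU]
  linarith [main n hn]
end
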